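/- Let σ be a positive definite Hermitian matrix on Fin n and let v : Fin n → ℂ be a unit vector. Then Re ⟨v, (log σ) · v⟩ ≤ log (Re ⟨v, σ · v⟩), where log σ is the matrix logarithm via the spectral functional calculus and the log on the right is the real natural logarithm. Equivalently, for the pure state Φ := v vᴴ and a positive definite density matrix σ, the quantum relative entropy satisfies D(Φ‖σ) = −Tr[Φ · log₂ σ] ≥ −log₂ Tr[Φ · σ]. -/

import Mathlib

open Matrix Kronecker
open scoped ComplexOrder

open scoped Classical in
noncomputable def matSqrt {n : Type*} [Fintype n] [DecidableEq n] (A : Matrix n n ℂ) :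
    Matrix n n ℂ :=
  if h : A.PosSemidef then
    (h.1.eigenvectorUnitary : Matrix n n ℂ) *
      Matrix.diagonal (fun i => (Real.sqrt (h.1.eigenvalues i) : ℂ)) *
      (star h.1.eigenvectorUnitary : Matrix n n ℂ)
  else 0

noncomputable def rootFidelity {n : Type*} [Fintype n] [DecidableEq n]
    (ρ σ : Matrix n n ℂ) : ℝ :=
  (matSqrt (matSqrt σ * ρ * matSqrt σ)).trace.re

noncomputable def fidelity {n : Type*} [Fintype n] [DecidableEq n]
    (ρ σ : Matrix n n ℂ) : ℝ :=
  (rootFidelity ρ σ) ^ 2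

noncomputable def traceNorm {n : Type*} [Fintype n] [DecidableEq n] (A : Matrix n n ℂ) : ℝ :=
  (matSqrt (Aᴴ * A)).trace.re

/-- The set of attainable type-II error values in hypothesis testing. -/
def testValues {n : Type*} [Fintype n] [DecidableEq n] (ρ σ : Matrix n n ℂ) (ε : ℝ) :
    Set ℝ :=
  { x | ∃ Λ : Matrix n n ℂ, Λ.PosSemidef ∧ (1 - Λ).PosSemidef ∧
      1 - ε ≤ (Λ * ρ).trace.re ∧ x = (Λ * σ).trace.re }

/-- ε-hypothesis-testing relative entropy. -/
noncomputable def Dh {n : Type*} [Fintype n] [DecidableEq n]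
    (ρ σ : Matrix n n ℂ) (ε : ℝ) : ℝ :=
  - Real.logb 2 (sInf (testValues ρ σ ε))

/-- GHZ unit vector. -/
noncomputable def ghz (M K : ℕ) : (Fin M → Fin K) → ℂ :=
  fun f => if ∃ c, ∀ m, f m = c then ((Real.sqrt K : ℂ))⁻¹ else 0

/-- GHZ rank-one projection. -/
noncomputable def ghzProj (M K : ℕ) : Matrix (Fin M → Fin K) (Fin M → Fin K) ℂ :=
  Matrix.vecMulVec (ghz M K) (star ∘ ghz M K)

/-- The twisting unitary. -/
def twist (M K d : ℕ)
    (U : (Fin M → Fin K) → Matrix (Fin M → Fin d) (Fin M → Fin d) ℂ) :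
    Matrix ((Fin M → Fin K) × (Fin M → Fin d)) ((Fin M → Fin K) × (Fin M → Fin d)) ℂ :=
  Matrix.of fun p q => if p.1 = q.1 then U p.1 p.2 q.2 else 0

/-- The privacy test `Π = W (Φ ⊗ 1) Wᴴ`. -/
noncomputable def privacyTest (M K d : ℕ)
    (U : (Fin M → Fin K) → Matrix (Fin M → Fin d) (Fin M → Fin d) ℂ) :
    Matrix ((Fin M → Fin K) × (Fin M → Fin d)) ((Fin M → Fin K) × (Fin M → Fin d)) ℂ :=
  twist M K d U * (ghzProj M K ⊗ₖ (1 : Matrix (Fin M → Fin d) (Fin M → Fin d) ℂ)) *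
    (twist M K d U)ᴴ

/-- The private state `γ = W (Φ ⊗ ω) Wᴴ`. -/
noncomputable def privateState (M K d : ℕ)
    (U : (Fin M → Fin K) → Matrix (Fin M → Fin d) (Fin M → Fin d) ℂ)
    (ω : Matrix (Fin M → Fin d) (Fin M → Fin d) ℂ) :
    Matrix ((Fin M → Fin K) × (Fin M → Fin d)) ((Fin M → Fin K) × (Fin M → Fin d)) ℂ :=
  twist M K d U * (ghzProj M K ⊗ₖ ω) * (twist M K d U)ᴴ

/-- A vector on `𝒦 × 𝒮` is product across the bipartition `J | Jᶜ` of the parties. -/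
def IsProductAcross {M K d : ℕ} (J : Set (Fin M))
    (v : (Fin M → Fin K) × (Fin M → Fin d) → ℂ) : Prop :=
  ∃ (v₁ : ((↥J) → Fin K) × ((↥J) → Fin d) → ℂ)
    (v₂ : ((↥(Jᶜ)) → Fin K) × ((↥(Jᶜ)) → Fin d) → ℂ),
    ∀ (f : Fin M → Fin K) (x : Fin M → Fin d),
      v (f, x) = v₁ (fun m => f m.1, fun m => x m.1) * v₂ (fun m => f m.1, fun m => x m.1)

/-- Biseparability: a finite convex combination of pure states, each product across
some nontrivial bipartition of the parties. -/
def Biseparable {M K d : ℕ}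
    (σ : Matrix ((Fin M → Fin K) × (Fin M → Fin d))
      ((Fin M → Fin K) × (Fin M → Fin d)) ℂ) : Prop :=
  ∃ (N : ℕ) (p : Fin N → ℝ) (w : Fin N → ((Fin M → Fin K) × (Fin M → Fin d)) → ℂ)
    (J : Fin N → Set (Fin M)),
    (∀ t, 0 ≤ p t) ∧ (∑ t, p t = 1) ∧
    (∀ t, ∑ i, ‖w t i‖ ^ 2 = 1) ∧
    (∀ t, J t ≠ ∅ ∧ J t ≠ Set.univ ∧ IsProductAcross (J t) (w t)) ∧
    σ = ∑ t, (p t : ℂ) • Matrix.vecMulVec (w t) (star ∘ w t)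

/-- Partial trace over the second tensor factor. -/
noncomputable def partialTrace₂ {A B : Type*} [Fintype B] (τ : Matrix (A × B) (A × B) ℂ) :
    Matrix A A ℂ :=
  Matrix.of fun a a' => ∑ b, τ (a, b) (a', b)

/-- Matrix logarithm of a Hermitian matrix via the spectral functional calculus. -/
noncomputable def matLog {n : Type*} [Fintype n] [DecidableEq n] (A : Matrix n n ℂ) :
    Matrix n n ℂ :=
  if hA : A.IsHermitian then
    (hA.eigenvectorUnitary : Matrix n n ℂ) *
      Matrix.diagonal (fun i => (Real.log (hA.eigenvalues i) : ℂ)) *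
      (star hA.eigenvectorUnitary : Matrix n n ℂ)
  else 0

/-! In an eigenbasis `U` of `σ`, the quadratic form `v ↦ Re ⟨v, f(σ) v⟩` becomes
`∑ᵢ f(λᵢ) |(U* v)ᵢ|²`, and the weights `|(U* v)ᵢ|²` form a probability vector because `U` is
unitary. Hence both sides are the average of `log` and the `log` of the average of the
eigenvalues under the same weights, and the inequality is Jensen's for the concave `log`. -/

namespace Matrix

variable {n 𝕜 : Type*} [Fintype n] [RCLike 𝕜]

lemma re_star_dotProduct_diagonal_mulVec [DecidableEq n] (d : n → ℝ) (w : n → 𝕜) :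
    RCLike.re (star w ⬝ᵥ diagonal (RCLike.ofReal ∘ d) *ᵥ w) = ∑ i, d i * ‖w i‖ ^ 2 := by
  simp only [dotProduct, mulVec_diagonal, map_sum]
  refine Finset.sum_congr rfl fun i _ => ?_
  rw [Pi.star_apply, RCLike.star_def, Function.comp_apply, mul_left_comm, RCLike.conj_mul]
  norm_cast

lemma star_dotProduct_conj_mulVec (U B : Matrix n n 𝕜) (v : n → 𝕜) :
    star v ⬝ᵥ (U * B * star U) *ᵥ v = star (star U *ᵥ v) ⬝ᵥ B *ᵥ (star U *ᵥ v) := by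
  rw [← mulVec_mulVec, ← mulVec_mulVec, dotProduct_mulVec, star_mulVec, star_eq_conjTranspose,
    conjTranspose_conjTranspose]

namespace IsHermitian

variable [DecidableEq n] {A : Matrix n n 𝕜} (hA : A.IsHermitian)
include hA

lemma re_star_dotProduct_cfc_mulVec (f : ℝ → ℝ) (v : n → 𝕜) :
    RCLike.re (star v ⬝ᵥ cfc f A *ᵥ v) =
      ∑ i, f (hA.eigenvalues i) * ‖(star (hA.eigenvectorUnitary : Matrix n n 𝕜) *ᵥ v) i‖ ^ 2 := by
  rw [hA.cfc_eq, IsHermitian.cfc, Unitary.conjStarAlgAut_apply,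
    star_dotProduct_conj_mulVec, re_star_dotProduct_diagonal_mulVec]
  rfl

lemma sum_norm_sq_star_eigenvectorUnitary_mulVec (v : n → 𝕜) :
    ∑ i, ‖(star (hA.eigenvectorUnitary : Matrix n n 𝕜) *ᵥ v) i‖ ^ 2 = ∑ i, ‖v i‖ ^ 2 := by
  have h := hA.re_star_dotProduct_cfc_mulVec (fun _ => 1) v
  have h₁ := re_star_dotProduct_diagonal_mulVec (fun _ => 1) v
  simp only [Function.comp_def, RCLike.ofReal_one, diagonal_one, one_mul] at h₁
  simp only [cfc_const_one ℝ A, one_mul] at h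
  rw [← h, h₁]

end IsHermitian

theorem _root_.ConcaveOn.re_star_dotProduct_cfc_mulVec_le [DecidableEq n] {A : Matrix n n 𝕜}
    (hA : A.IsHermitian) {s : Set ℝ} {f : ℝ → ℝ} (hf : ConcaveOn ℝ s f)
    (hs : ∀ i, hA.eigenvalues i ∈ s) {v : n → 𝕜} (hv : ∑ i, ‖v i‖ ^ 2 = 1) :
    RCLike.re (star v ⬝ᵥ cfc f A *ᵥ v) ≤ f (RCLike.re (star v ⬝ᵥ A *ᵥ v)) := by
  conv_rhs => rw [← cfc_id' ℝ A]
  rw [hA.re_star_dotProduct_cfc_mulVec, hA.re_star_dotProduct_cfc_mulVec]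
  simpa only [smul_eq_mul, mul_comm] using hf.le_map_sum (t := Finset.univ)
    (w := fun i => ‖(star (hA.eigenvectorUnitary : Matrix n n 𝕜) *ᵥ v) i‖ ^ 2)
    (p := hA.eigenvalues) (fun i _ => by positivity)
    (by rw [hA.sum_norm_sq_star_eigenvectorUnitary_mulVec, hv]) (fun i _ => hs i)

end Matrix

lemma matLog_eq_cfc {n : Type*} [Fintype n] [DecidableEq n] {A : Matrix n n ℂ}
    (hA : A.IsHermitian) : matLog A = cfc Real.log A := by
  rw [matLog, dif_pos hA, hA.cfc_eq, IsHermitian.cfc, Unitary.conjStarAlgAut_apply]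
  rfl

/-- for a positive definite `σ` and a unit vector `v`,
`Re ⟨v, (log σ) v⟩ ≤ log (Re ⟨v, σ v⟩)` (concavity of the logarithm; equivalently
`D(Φ‖σ) ≥ −log₂ Tr[Φ σ]` for the pure state `Φ = v vᴴ`). -/
theorem stmt_14 (n : ℕ) (σ : Matrix (Fin n) (Fin n) ℂ) (hσ : σ.PosDef)
    (v : Fin n → ℂ) (hv : ∑ i, ‖v i‖ ^ 2 = 1) :
    (star v ⬝ᵥ (matLog σ).mulVec v).re ≤ Real.log ((star v ⬝ᵥ σ.mulVec v).re) := by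
  rw [matLog_eq_cfc hσ.isHermitian]
  exact strictConcaveOn_log_Ioi.concaveOn.re_star_dotProduct_cfc_mulVec_le hσ.isHermitian
    hσ.eigenvalues_pos hv
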